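/- The polynomials q_n(x) = (4x² - 2) H_{n-1}'(x) - 8x H_{n-1}(x), for n ≥ 1, satisfy q_n''(x) - (2(2x³ + 3x)/(2x² - 1)) q_n'(x) + (8/(2x² - 1)) q_n(x) = -2n q_n(x) for all x with 2x² ≠ 1. -/

import Mathlib

/-!
Since `H₂ = 4x² - 2`, the polynomial `q_n` is the Wronskian `W(H₂, H_{n-1})`. Differentiating the
Hermite equation `H'' = 2x H' - 2m H` once more expresses `H'''` through `H'` and `H''`, so `W`,
`W'` and `W''` are all combinations of `H`, `H'`, `H''`; after clearing the denominator `2x² - 1`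
the two-gap equation for `W` becomes a polynomial identity that follows from the Hermite equation
of `H = H_{n-1}` and its derivative.
-/

open Polynomial

/-- The physicists' Hermite polynomials, via `H_{n+1} = 2x H_n - H_n'`. -/
noncomputable def physHermite : ℕ → Polynomial ℝ
  | 0 => 1
  | n + 1 => C 2 * X * physHermite n - derivative (physHermite n)

theorem physHermite_succ (m : ℕ) :
    physHermite (m + 1) = 2 * X * physHermite m - derivative (physHermite m) := by
  rw [physHermite, map_ofNat]

theorem derivative_physHermite_succ (m : ℕ) :
    derivative (physHermite (m + 1)) = C (2 * ((m : ℝ) + 1)) * physHermite m := by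
  induction m with
  | zero => simp [physHermite]
  | succ k ih =>
    rw [physHermite_succ (k + 1), derivative_sub, derivative_mul, ih, derivative_C_mul,
      physHermite_succ k]
    simp only [derivative_mul, derivative_X, derivative_ofNat, C_mul, C_add, C_1, Nat.cast_add,
      Nat.cast_one, map_ofNat]
    ring

theorem physHermite_ode (m : ℕ) :
    derivative (derivative (physHermite m)) =
      2 * X * derivative (physHermite m) - 2 * C (m : ℝ) * physHermite m := by
  cases m with
  | zero => simp [physHermite]
  | succ k =>
    rw [derivative_physHermite_succ, derivative_C_mul, physHermite_succ]
    simp only [C_mul, C_add, C_1, Nat.cast_add, Nat.cast_one, map_ofNat]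
    ring

theorem Polynomial.derivative_wronskian {R : Type*} [CommRing R] (a b : R[X]) :
    derivative (wronskian a b) =
      a * derivative (derivative b) - derivative (derivative a) * b := by
  simp only [wronskian, derivative_sub, derivative_mul]
  ring

/-- The two-gap operator `L̃` multiplied by `2x² - 1`, which makes it polynomial. -/
noncomputable def twoGapOp {R : Type*} [CommRing R] (p : R[X]) : R[X] :=
  (2 * X ^ 2 - 1) * derivative (derivative p) - 2 * (2 * X ^ 3 + 3 * X) * derivative p + 8 * p

theorem twoGapOp_wronskian_of_hermite_ode {R : Type*} [CommRing R] {H : R[X]} {c : R}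
    (hH : derivative (derivative H) = 2 * X * derivative H - 2 * C c * H) :
    twoGapOp (wronskian (4 * X ^ 2 - 2) H) =
      -2 * (C c + 1) * (2 * X ^ 2 - 1) * wronskian (4 * X ^ 2 - 2) H := by
  have h8 : derivative (derivative (4 * X ^ 2 - 2 : R[X])) = 8 := by
    simp only [derivative_sub, derivative_mul, derivative_X_sq, derivative_ofNat, map_ofNat,
      derivative_add, derivative_X, derivative_zero]
    ring
  have hH' := congrArg derivative hH
  simp only [derivative_mul, derivative_sub, derivative_ofNat, derivative_X, derivative_C] at hH'
  rw [twoGapOp, derivative_wronskian, h8]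
  simp only [wronskian, derivative_mul, derivative_sub, derivative_ofNat, derivative_X_sq,
    map_ofNat]
  -- eliminate `H'''` with the differentiated equation, then `H''` with the equation itself
  linear_combination 2 * (2 * X ^ 2 - 1) ^ 2 * hH' - 8 * X * (2 * X ^ 2 - 1) * hH

theorem twoGap_eval_eq_eval_twoGapOp (p : ℝ[X]) {x : ℝ} (hx : 2 * x ^ 2 - 1 ≠ 0) :
    deriv (deriv fun y => p.eval y) x
        - (2 * (2 * x ^ 3 + 3 * x) / (2 * x ^ 2 - 1)) * deriv (fun y => p.eval y) x
        + (8 / (2 * x ^ 2 - 1)) * p.eval x =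
      (twoGapOp p).eval x / (2 * x ^ 2 - 1) := by
  have hderiv : deriv (fun y => p.eval y) = fun y => p.derivative.eval y :=
    funext fun y => Polynomial.deriv p
  simp only [hderiv, Polynomial.deriv, twoGapOp, eval_add, eval_sub, eval_mul, eval_pow, eval_X,
    eval_ofNat, eval_one]
  field_simp

theorem eval_wronskian_physHermite (m : ℕ) (y : ℝ) :
    (wronskian (4 * X ^ 2 - 2) (physHermite m)).eval y =
      (4 * y ^ 2 - 2) * (derivative (physHermite m)).eval y - 8 * y * (physHermite m).eval y := by
  simp only [wronskian, eval_sub, eval_mul, eval_pow, eval_X, eval_ofNat, derivative_sub,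
    derivative_mul, derivative_X_sq, derivative_ofNat, map_ofNat, eval_add, eval_zero]
  ring

/-- `q_n(x) = (4x²-2) H_{n-1}'(x) - 8x H_{n-1}(x)` satisfies the two-gap equation
`q_n'' - (2(2x³+3x)/(2x²-1)) q_n' + (8/(2x²-1)) q_n = -2n q_n` for all `x` with `2x² ≠ 1`. -/
theorem two_gap_polynomial_eigenfunction (n : ℕ) (hn : 1 ≤ n) :
    ∀ x : ℝ, 2 * x ^ 2 ≠ 1 →
      (fun q : ℝ → ℝ =>
          deriv (deriv q) x - (2 * (2 * x ^ 3 + 3 * x) / (2 * x ^ 2 - 1)) * deriv q x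
            + (8 / (2 * x ^ 2 - 1)) * q x)
        (fun y => (4 * y ^ 2 - 2) * (derivative (physHermite (n - 1))).eval y
            - 8 * y * (physHermite (n - 1)).eval y) =
      -2 * (n : ℝ) * ((4 * x ^ 2 - 2) * (derivative (physHermite (n - 1))).eval x
            - 8 * x * (physHermite (n - 1)).eval x) := by
  intro x hx
  obtain ⟨m, rfl⟩ := Nat.exists_eq_add_of_le' hn
  have hx' : 2 * x ^ 2 - 1 ≠ 0 := sub_ne_zero.mpr hx
  simp only [Nat.add_sub_cancel, ← eval_wronskian_physHermite]
  rw [twoGap_eval_eq_eval_twoGapOp _ hx', twoGapOp_wronskian_of_hermite_ode (physHermite_ode m)]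
  simp only [eval_mul, eval_neg, eval_add, eval_sub, eval_pow, eval_X, eval_C, eval_ofNat, eval_one]
  field_simp
  push_cast
  ring
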